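/- For a positive definite N×N complex matrix X and s < 0, one has tr X^s = sup over positive definite Y of ( s·tr(XY) − (s−1)·tr Y^{s/(s−1)} ). -/

import Mathlib

/-
Put p = s/(s−1) ∈ (0,1). Klein's inequality for the concave function t ↦ t^p gives, for all
positive definite Y and Z,
  tr Y^p ≤ tr Z^p + p · tr((Y − Z) Z^(p−1)).
Taking Z = X^(s−1), so that Z^p = X^s and Z^(p−1) = X, and multiplying by 1 − s > 0 turns this into
s · tr(XY) − (s−1) · tr Y^p ≤ tr X^s, with equality at Y = Z. Klein's inequality itself comes from
expanding both sides in eigenbases of Y and Z: it becomes an average, with the weights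
|⟨u_j, v_k⟩|², of the scalar tangent inequality.
-/

open Matrix ComplexOrder

noncomputable def mpow {n : Type*} [Fintype n] [DecidableEq n]
    (A : Matrix n n ℂ) (p : ℝ) : Matrix n n ℂ :=
  cfc (fun x : ℝ => x ^ p) A

noncomputable def rtr {n : Type*} [Fintype n] (A : Matrix n n ℂ) : ℝ :=
  (Matrix.trace A).re

section Trace

variable {n : Type*} [Fintype n]

lemma rtr_sub (A B : Matrix n n ℂ) : rtr (A - B) = rtr A - rtr B := by
  simp [rtr]

lemma rtr_smul (c : ℝ) (A : Matrix n n ℂ) : rtr (c • A) = c * rtr A := by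
  simp [rtr]

lemma rtr_mul_comm (A B : Matrix n n ℂ) : rtr (A * B) = rtr (B * A) := by
  rw [rtr, trace_mul_comm, rtr]

end Trace

namespace Matrix

variable {n : Type*} [Fintype n] [DecidableEq n]

lemma continuousOn_spectrum_real (A : Matrix n n ℂ) (f : ℝ → ℝ) :
    ContinuousOn f (spectrum ℝ A) :=
  A.finite_real_spectrum.continuousOn f

lemma PosDef.pos_of_mem_spectrum_real {A : Matrix n n ℂ} (hA : A.PosDef) {x : ℝ}
    (hx : x ∈ spectrum ℝ A) : 0 < x := by
  obtain ⟨i, rfl⟩ := hA.1.spectrum_real_eq_range_eigenvalues ▸ hx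
  exact hA.eigenvalues_pos i

lemma IsHermitian.posDef_of_spectrum_pos {A : Matrix n n ℂ} (hA : A.IsHermitian)
    (h : ∀ x ∈ spectrum ℝ A, 0 < x) : A.PosDef :=
  hA.posDef_iff_eigenvalues_pos.mpr fun i => h _ (hA.eigenvalues_mem_spectrum_real i)

end Matrix

section Klein

variable {n : Type*} [Fintype n] [DecidableEq n]

lemma rtr_diagonal_mul_mul_diagonal_mul_star (c d : n → ℝ) (W : Matrix n n ℂ) :
    rtr (diagonal (fun j => (c j : ℂ)) * W * diagonal (fun k => (d k : ℂ)) * star W) =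
      ∑ j, ∑ k, c j * d k * Complex.normSq (W j k) := by
  simp only [rtr, trace, diag_apply, mul_apply (M := _ * _ * _), Complex.re_sum]
  refine Finset.sum_congr rfl fun j _ => Finset.sum_congr rfl fun k _ => ?_
  simp only [mul_diagonal, diagonal_mul, star_apply]
  rw [mul_right_comm _ _ (star _), mul_assoc _ (W j k), Complex.star_def, Complex.mul_conj]
  norm_cast
  ring

lemma rtr_cfc_mul_cfc {A B : Matrix n n ℂ} (hA : A.IsHermitian) (hB : B.IsHermitian)
    (φ ψ : ℝ → ℝ) :
    rtr (cfc φ A * cfc ψ B) = ∑ j, ∑ k, φ (hA.eigenvalues j) * ψ (hB.eigenvalues k) *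
      Complex.normSq
        ((star (hA.eigenvectorUnitary : Matrix n n ℂ) * hB.eigenvectorUnitary) j k) := by
  set U := (hA.eigenvectorUnitary : Matrix n n ℂ)
  set V := (hB.eigenvectorUnitary : Matrix n n ℂ)
  have hU : star U * U = 1 := Unitary.star_mul_self_of_mem hA.eigenvectorUnitary.2
  have hU' : U * star U = 1 := Unitary.mul_star_self_of_mem hA.eigenvectorUnitary.2
  have h : cfc φ A * cfc ψ B =
      U * (diagonal (fun j => (φ (hA.eigenvalues j) : ℂ)) * (star U * V) *
        diagonal (fun k => (ψ (hB.eigenvalues k) : ℂ)) * star (star U * V)) * star U := by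
    simp only [hA.cfc_eq, hB.cfc_eq, IsHermitian.cfc, Unitary.conjStarAlgAut_apply, star_mul,
      star_star, mul_assoc]
    rw [hU', mul_one]
    rfl
  rw [h, rtr_mul_comm, ← mul_assoc, hU, one_mul, rtr_diagonal_mul_mul_diagonal_mul_star]

/-- Klein's trace inequality. -/
theorem rtr_cfc_le_of_tangent {A B : Matrix n n ℂ} (hA : A.IsHermitian) (hB : B.IsHermitian)
    {f g : ℝ → ℝ} (hfg : ∀ x ∈ spectrum ℝ A, ∀ y ∈ spectrum ℝ B, f x ≤ f y + (x - y) * g y) :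
    rtr (cfc f A) ≤ rtr (cfc f B) + rtr ((A - B) * cfc g B) := by
  -- Padding with `cfc 1 = 1` puts all four traces in the shape of `rtr_cfc_mul_cfc`.
  have hfA : cfc f A = cfc f A * cfc (fun _ : ℝ => (1 : ℝ)) B := by
    rw [cfc_const_one ℝ B hB.isSelfAdjoint, mul_one]
  have hfB : cfc f B = cfc (fun _ : ℝ => (1 : ℝ)) A * cfc f B := by
    rw [cfc_const_one ℝ A hA.isSelfAdjoint, one_mul]
  have hAB : (A - B) * cfc g B =
      cfc (fun x : ℝ => x) A * cfc g B -
        cfc (fun _ : ℝ => (1 : ℝ)) A * cfc (fun y => y * g y) B := by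
    rw [cfc_id' ℝ A hA.isSelfAdjoint, cfc_const_one ℝ A hA.isSelfAdjoint, one_mul,
      cfc_mul _ _ B (continuousOn_spectrum_real B _) (continuousOn_spectrum_real B _),
      cfc_id' ℝ B hB.isSelfAdjoint, sub_mul]
  rw [hfA, hfB, hAB, rtr_sub]
  simp only [rtr_cfc_mul_cfc hA hB, ← Finset.sum_sub_distrib, ← Finset.sum_add_distrib]
  gcongr with j _ k _
  have := mul_le_mul_of_nonneg_right
    (hfg _ (hA.eigenvalues_mem_spectrum_real j) _ (hB.eigenvalues_mem_spectrum_real k))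
    (Complex.normSq_nonneg
      ((star (hA.eigenvectorUnitary : Matrix n n ℂ) * hB.eigenvectorUnitary) j k))
  linarith

end Klein

section Power

variable {n : Type*} [Fintype n] [DecidableEq n]

lemma mpow_posDef {X : Matrix n n ℂ} (hX : X.PosDef) (r : ℝ) : (mpow X r).PosDef := by
  refine IsHermitian.posDef_of_spectrum_pos (cfc_predicate _ X) fun y hy => ?_
  rw [mpow, cfc_map_spectrum _ X hX.1.isSelfAdjoint (continuousOn_spectrum_real X _)] at hy
  obtain ⟨x, hx, rfl⟩ := hy
  exact Real.rpow_pos_of_pos (hX.pos_of_mem_spectrum_real hx) r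

lemma mpow_one {X : Matrix n n ℂ} (hX : X.IsHermitian) : mpow X 1 = X :=
  (cfc_congr fun x _ => Real.rpow_one x).trans (cfc_id' ℝ X hX.isSelfAdjoint)

lemma mpow_mul_mpow {X : Matrix n n ℂ} (hX : X.PosDef) (a b : ℝ) :
    mpow X a * mpow X b = mpow X (a + b) := by
  rw [mpow, mpow, mpow, ← cfc_mul _ _ X (continuousOn_spectrum_real X _)
    (continuousOn_spectrum_real X _)]
  exact cfc_congr fun x hx => (Real.rpow_add (hX.pos_of_mem_spectrum_real hx) a b).symm

lemma mpow_mpow {X : Matrix n n ℂ} (hX : X.PosDef) (a b : ℝ) :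
    mpow (mpow X a) b = mpow X (a * b) := by
  rw [mpow, mpow, mpow, ← cfc_comp _ _ X hX.1.isSelfAdjoint
    ((X.finite_real_spectrum.image _).continuousOn _) (continuousOn_spectrum_real X _)]
  exact cfc_congr fun x hx => (Real.rpow_mul (hX.pos_of_mem_spectrum_real hx).le a b).symm

end Power

lemma Real.rpow_le_tangent_of_le_one {p x y : ℝ} (hp₀ : 0 ≤ p) (hp₁ : p ≤ 1) (hx : 0 ≤ x)
    (hy : 0 < y) : x ^ p ≤ y ^ p + (x - y) * (p * y ^ (p - 1)) := by
  have amgm := Real.geom_mean_le_arith_mean2_weighted hp₀ (sub_nonneg.2 hp₁) hx hy.le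
    (add_sub_cancel p 1)
  have hy' : y ^ (1 - p) * y ^ (p - 1) = 1 := by
    rw [← Real.rpow_add hy]
    norm_num
  have hyp : y * y ^ (p - 1) = y ^ p := by
    rw [mul_comm, ← Real.rpow_add_one hy.ne', sub_add_cancel]
  calc x ^ p = x ^ p * y ^ (1 - p) * y ^ (p - 1) := by rw [mul_assoc, hy', mul_one]
    _ ≤ (p * x + (1 - p) * y) * y ^ (p - 1) := by gcongr
    _ = y ^ p + (x - y) * (p * y ^ (p - 1)) := by rw [← hyp]; ring

theorem rtr_mpow_le_tangent {n : Type*} [Fintype n] [DecidableEq n]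
    {Y Z : Matrix n n ℂ} (hY : Y.PosDef) (hZ : Z.PosDef) {p : ℝ}
    (hp₀ : 0 ≤ p) (hp₁ : p ≤ 1) :
    rtr (mpow Y p) ≤ rtr (mpow Z p) + p * rtr ((Y - Z) * mpow Z (p - 1)) := by
  have tangent := rtr_cfc_le_of_tangent hY.1 hZ.1 (f := fun x => x ^ p)
    (g := fun y => p * y ^ (p - 1)) fun x hx y hy =>
      Real.rpow_le_tangent_of_le_one hp₀ hp₁ (hY.pos_of_mem_spectrum_real hx).le
        (hZ.pos_of_mem_spectrum_real hy)
  rwa [cfc_const_mul _ _ Z (continuousOn_spectrum_real Z _), Matrix.mul_smul, rtr_smul] at tangent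

theorem trace_pow_variational_sup_neg {N : ℕ} (X : Matrix (Fin N) (Fin N) ℂ)
    (hX : X.PosDef) (s : ℝ) (hs : s < 0) :
    rtr (mpow X s) =
      sSup { r : ℝ | ∃ Y : Matrix (Fin N) (Fin N) ℂ, Y.PosDef ∧
        r = s * rtr (X * Y) - (s - 1) * rtr (mpow Y (s / (s - 1))) } := by
  set p := s / (s - 1) with hp
  have hs₁ : s - 1 < 0 := by linarith
  have hp₀ : 0 < p := div_pos_of_neg_of_neg hs hs₁
  have hp₁ : p < 1 := (div_lt_one_of_neg hs₁).2 (by linarith)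
  have hsp : (s - 1) * p = s := by rw [hp, mul_div_cancel₀ _ hs₁.ne]
  set Y₀ := mpow X (s - 1)
  have hY₀p : mpow Y₀ p = mpow X s := by rw [mpow_mpow hX, hsp]
  have hY₀p₁ : mpow Y₀ (p - 1) = X := by
    rw [mpow_mpow hX, show (s - 1) * (p - 1) = 1 by linarith, mpow_one hX.1]
  have hXY₀ : X * Y₀ = mpow X s := by
    conv_lhs => rw [← mpow_one hX.1]
    rw [mpow_mul_mpow hX, add_sub_cancel]
  refine (IsGreatest.csSup_eq ⟨?_, ?_⟩).symm
  · exact ⟨Y₀, mpow_posDef hX _, by rw [hXY₀, hY₀p]; ring⟩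
  · rintro r ⟨Y, hY, rfl⟩
    have tangent := rtr_mpow_le_tangent hY (mpow_posDef hX (s - 1)) hp₀.le hp₁.le
    rw [hY₀p, hY₀p₁, sub_mul, rtr_sub, rtr_mul_comm Y, rtr_mul_comm Y₀, hXY₀] at tangent
    have scaled := mul_le_mul_of_nonneg_left tangent (by linarith : 0 ≤ 1 - s)
    linear_combination scaled - (rtr (X * Y) - rtr (mpow X s)) * hsp
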